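/- The only quadruples of positive integers (i, j, a, f0) with i ≥ 4, j ≥ 4, a ≥ 3, f0 ≥ 12, f0·(7·i·j·a − 6·i·a − 6·i·j − 12·j·a) = 12·i·j·a (as integers), 3 ∣ f0, i ∣ 2·f0, j ∣ f0, a ∣ f0, 2·f0 ≥ 3·i, f0 ≥ 3·j, and f0 ≥ 3·a, are (4, 4, 3, 24) and (4, 4, 4, 12). -/

import Mathlib

/-!
Since `f0 ≥ 12`, the Euler relation `f0 · D = 12 ija` gives `D ≤ ija` for
`D = 7ija − 6ia − 6ij − 12ja`, i.e. `1 ≤ 2/i + 1/j + 1/a`. With `j ≥ 4` and `a ≥ 3` this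
forces `i = 4`, and then `(j − 2)(a − 2) ≤ 4` leaves `(j, a) ∈ {(4,3), (5,3), (6,3), (4,4)}`.
In each case the relation determines `f0`, and the divisibility and size conditions rule out
all but `(4,3)` and `(4,4)`.
-/

lemma le_of_mul_eq_mul_of_le {c f d n : ℤ} (hc : 0 < c) (hn : 0 ≤ n) (hcf : c ≤ f)
    (h : f * d = c * n) : d ≤ n := by
  rcases le_or_gt d 0 with hd | hd
  · exact hd.trans hn
  · have : c * d ≤ c * n := h ▸ mul_le_mul_of_nonneg_right hcf hd.le
    exact le_of_mul_le_mul_left this hc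

lemma eq_four_of_angle_bound {i j a : ℕ} (hi : 4 ≤ i) (hj : 4 ≤ j) (ha : 3 ≤ a)
    (h : 6 * i * j * a ≤ 6 * i * a + 6 * i * j + 12 * j * a) : i = 4 := by
  zify at hi hj ha h ⊢
  nlinarith [mul_nonneg (sub_nonneg.2 hj) (sub_nonneg.2 ha)]

lemma le_six_and_le_four_of_mul_le {j a : ℕ} (hj : 4 ≤ j) (ha : 3 ≤ a)
    (h : j * a ≤ 2 * a + 2 * j) : j ≤ 6 ∧ a ≤ 4 := by
  constructor <;> nlinarith

/-- Type `[3^1, i^1, j^1, a^1, i^1]`: the only solutions are `(4,4,3,24)` and `(4,4,4,12)`. -/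
theorem type_3ijai (i j a f0 : ℕ) :
    (0 < i ∧ 0 < j ∧ 0 < a ∧ 0 < f0 ∧ i ≥ 4 ∧ j ≥ 4 ∧ a ≥ 3 ∧ f0 ≥ 12 ∧
        (f0 : ℤ) * (7 * (i : ℤ) * j * a - 6 * i * a - 6 * i * j - 12 * j * a) =
          12 * (i : ℤ) * j * a ∧
        3 ∣ f0 ∧ i ∣ 2 * f0 ∧ j ∣ f0 ∧ a ∣ f0 ∧
        2 * f0 ≥ 3 * i ∧ f0 ≥ 3 * j ∧ f0 ≥ 3 * a) ↔
      ((i, j, a, f0) = (4, 4, 3, 24) ∨ (i, j, a, f0) = (4, 4, 4, 12)) := by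
  constructor
  · rintro ⟨-, -, -, -, hi, hj, ha, hf, heuler, -, hi2f, -, -, -, hfj, -⟩
    have hD : 7 * (i : ℤ) * j * a - 6 * i * a - 6 * i * j - 12 * j * a ≤ i * j * a :=
      le_of_mul_eq_mul_of_le (c := 12) (f := f0) (by norm_num) (by positivity)
        (by exact_mod_cast hf) (by rw [heuler]; ring)
    have hangle : 6 * i * j * a ≤ 6 * i * a + 6 * i * j + 12 * j * a := by
      zify; linarith
    obtain rfl := eq_four_of_angle_bound hi hj ha hangle
    obtain ⟨hj6, ha4⟩ := le_six_and_le_four_of_mul_le hj ha (by linarith)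
    interval_cases j <;> interval_cases a <;> norm_num at heuler ⊢ <;> omega
  · rintro (h | h) <;> obtain ⟨rfl, rfl, rfl, rfl⟩ := Prod.ext_iff.mp h <;> norm_num
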